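/- arXiv:1810.11715 — 4 statements merged into one kernel-verified Lean document; each statement's English description precedes it below -/
import Mathlib

section
/- Consider the system Ẋ = k₁ − XZ, Ẏ = X − 4k₃Y² + (4k₄/k₅)Z − k₂Y^ε, Ż = k₃k₅Y² − k₄Z with positive parameters k₁,…,k₅ and ε > −2, where k₁ = k₂k₃k₅/k₄. Then the unique stationary point (X,Y,Z) with X > 0, Y > 0, Z > 0 is (X,Y,Z) = (k₂, 1, k₃k₅/k₄). -/
/-!
Solving the third equation for `Z` makes the `Y²` terms of the second cancel (`4 k₃ Y² = (4k₄/k₅) Z`),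
which leaves `X = k₂ Y^ε`. Substituting both into the first equation and using `k₁ = k₂k₃k₅/k₄`
turns it into `k₁ (1 - Y^(ε+2)) = 0`, and `Y^(ε+2) = 1` forces `Y = 1` because `ε + 2 ≠ 0`.
-/

namespace Real

lemma rpow_eq_one_iff_of_nonneg {x a : ℝ} (hx : 0 ≤ x) (ha : a ≠ 0) : x ^ a = 1 ↔ x = 1 := by
  simpa only [one_rpow] using rpow_left_inj hx zero_le_one ha

end Real

section StationaryPoint

variable {k₂ k₃ k₄ k₅ ε X Y Z : ℝ}

lemma stationary_Z_iff (hk₄ : k₄ ≠ 0) : k₃ * k₅ * Y ^ 2 - k₄ * Z = 0 ↔ Z = k₃ * k₅ * Y ^ 2 / k₄ := by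
  rw [sub_eq_zero, eq_div_iff hk₄, mul_comm Z, eq_comm]

lemma stationary_X_iff (hk₄ : k₄ ≠ 0) (hk₅ : k₅ ≠ 0) (hZ : Z = k₃ * k₅ * Y ^ 2 / k₄) :
    X - 4 * k₃ * Y ^ 2 + (4 * k₄ / k₅) * Z - k₂ * Y ^ ε = 0 ↔ X = k₂ * Y ^ ε := by
  have hcancel : (4 * k₄ / k₅) * Z = 4 * k₃ * Y ^ 2 := by
    rw [hZ]; field_simp
  rw [hcancel, sub_add_cancel, sub_eq_zero]

lemma stationary_Y_iff (hk₂ : k₂ ≠ 0) (hk₃ : k₃ ≠ 0) (hk₄ : k₄ ≠ 0) (hk₅ : k₅ ≠ 0) (hY : 0 < Y)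
    (hX : X = k₂ * Y ^ ε) (hZ : Z = k₃ * k₅ * Y ^ 2 / k₄) :
    k₂ * k₃ * k₅ / k₄ - X * Z = 0 ↔ Y ^ (ε + 2) = 1 := by
  have hXZ : X * Z = k₂ * k₃ * k₅ / k₄ * Y ^ (ε + 2) := by
    rw [hX, hZ, Real.rpow_add hY, Real.rpow_two]; ring
  have hk₁ : k₂ * k₃ * k₅ / k₄ ≠ 0 := by positivity
  rw [hXZ, ← mul_one_sub, mul_eq_zero, or_iff_right hk₁, sub_eq_zero, eq_comm]

lemma stationary_iff (hk₂ : k₂ ≠ 0) (hk₃ : k₃ ≠ 0) (hk₄ : k₄ ≠ 0) (hk₅ : k₅ ≠ 0) (hY : 0 < Y) :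
    (k₂ * k₃ * k₅ / k₄ - X * Z = 0 ∧
     X - 4 * k₃ * Y ^ 2 + (4 * k₄ / k₅) * Z - k₂ * Y ^ ε = 0 ∧
     k₃ * k₅ * Y ^ 2 - k₄ * Z = 0)
    ↔ Z = k₃ * k₅ * Y ^ 2 / k₄ ∧ X = k₂ * Y ^ ε ∧ Y ^ (ε + 2) = 1 := by
  constructor
  · rintro ⟨h₁, h₂, h₃⟩
    have hZ := (stationary_Z_iff hk₄).mp h₃
    have hX := (stationary_X_iff hk₄ hk₅ hZ).mp h₂
    exact ⟨hZ, hX, (stationary_Y_iff hk₂ hk₃ hk₄ hk₅ hY hX hZ).mp h₁⟩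
  · rintro ⟨hZ, hX, hY₁⟩
    exact ⟨(stationary_Y_iff hk₂ hk₃ hk₄ hk₅ hY hX hZ).mpr hY₁,
      (stationary_X_iff hk₄ hk₅ hZ).mpr hX, (stationary_Z_iff hk₄).mpr hZ⟩

end StationaryPoint

theorem stationary_point_unique_general
    (k₁ k₂ k₃ k₄ k₅ ε : ℝ)
    (hk₂ : 0 < k₂) (hk₃ : 0 < k₃) (hk₄ : 0 < k₄) (hk₅ : 0 < k₅)
    (hε : -2 < ε)
    (hrel : k₁ = k₂ * k₃ * k₅ / k₄)
    (X Y Z : ℝ) (hY : 0 < Y) :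
    (k₁ - X * Z = 0 ∧
     X - 4 * k₃ * Y ^ 2 + (4 * k₄ / k₅) * Z - k₂ * Y ^ ε = 0 ∧
     k₃ * k₅ * Y ^ 2 - k₄ * Z = 0)
    ↔ (X, Y, Z) = (k₂, 1, k₃ * k₅ / k₄) := by
  have hε₂ : ε + 2 ≠ 0 := by linarith
  rw [hrel, stationary_iff hk₂.ne' hk₃.ne' hk₄.ne' hk₅.ne' hY,
    Real.rpow_eq_one_iff_of_nonneg hY.le hε₂, Prod.mk.injEq, Prod.mk.injEq]
  constructor <;> rintro ⟨rfl, rfl, rfl⟩ <;> simp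

/-- For the dimensionless olfactory-neuron system with positive
parameters and `k₁ = k₂k₃k₅/k₄`, the unique positive stationary point is
`(k₂, 1, k₃k₅/k₄)`. -/
theorem stationary_point_unique
    (k₁ k₂ k₃ k₄ k₅ ε : ℝ)
    (hk₁ : 0 < k₁) (hk₂ : 0 < k₂) (hk₃ : 0 < k₃) (hk₄ : 0 < k₄) (hk₅ : 0 < k₅)
    (hε : -2 < ε)
    (hrel : k₁ = k₂ * k₃ * k₅ / k₄)
    (X Y Z : ℝ) (hX : 0 < X) (hY : 0 < Y) (hZ : 0 < Z) :
    (k₁ - X * Z = 0 ∧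
     X - 4 * k₃ * Y ^ 2 + (4 * k₄ / k₅) * Z - k₂ * Y ^ ε = 0 ∧
     k₃ * k₅ * Y ^ 2 - k₄ * Z = 0)
    ↔ (X, Y, Z) = (k₂, 1, k₃ * k₅ / k₄) :=
  stationary_point_unique_general k₁ k₂ k₃ k₄ k₅ ε hk₂ hk₃ hk₄ hk₅ hε hrel X Y Z hY
end

section
/- Define ε = −2k₃k₄k₅(−k₄ + 8k₃k₄ + k₄² + k₃k₅) / ((−k₄ + k₃k₅)(−k₄² + 8k₃k₄² + k₄³ − k₃k₅ + k₃k₄k₅)). If k₃ > 0, k₄ > 0, k₅ > 0, 8k₃ < 1, 8k₃ + k₄ < 1 and 8k₃k₄ + k₃k₅ + k₄² < k₄, then the denominator (−k₄ + k₃k₅)(−k₄² + 8k₃k₄² + k₄³ − k₃k₅ + k₃k₄k₅) is nonzero and ε > 0. -/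
/-! With `N := -k₄ + 8k₃k₄ + k₄² + k₃k₅`, the last condition says `N < 0`. The numerator of ε is
`-2k₃k₄k₅ N > 0`, and both factors of the denominator are negative:
`-k₄ + k₃k₅ = N - 8k₃k₄ - k₄²` and the second factor is `k₄ N - k₃k₅`. -/

lemma neg_mul_div_mul_pos {K : Type*} [Field K] [LinearOrder K] [IsStrictOrderedRing K]
    {c n a b : K} (hc : 0 < c) (hn : n < 0) (ha : a < 0) (hb : b < 0) :
    0 < -(c * n) / (a * b) :=
  div_pos (neg_pos.2 (mul_neg_of_pos_of_neg hc hn)) (mul_pos_of_neg_of_neg ha hb)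

theorem epsilon_pos_general
    (k₃ k₄ k₅ : ℝ)
    (h₃ : 0 < k₃) (h₄ : 0 < k₄) (h₅ : 0 < k₅)
    (h3 : 8 * k₃ * k₄ + k₃ * k₅ + k₄ ^ 2 < k₄) :
    (-k₄ + k₃ * k₅) *
      (-k₄ ^ 2 + 8 * k₃ * k₄ ^ 2 + k₄ ^ 3 - k₃ * k₅ + k₃ * k₄ * k₅) ≠ 0 ∧
    0 < -(2 * k₃ * k₄ * k₅ * (-k₄ + 8 * k₃ * k₄ + k₄ ^ 2 + k₃ * k₅)) /
      ((-k₄ + k₃ * k₅) *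
        (-k₄ ^ 2 + 8 * k₃ * k₄ ^ 2 + k₄ ^ 3 - k₃ * k₅ + k₃ * k₄ * k₅)) := by
  have hN : -k₄ + 8 * k₃ * k₄ + k₄ ^ 2 + k₃ * k₅ < 0 := by linarith
  have hA : -k₄ + k₃ * k₅ < 0 := by linarith [mul_pos h₃ h₄, sq_nonneg k₄]
  have hB : -k₄ ^ 2 + 8 * k₃ * k₄ ^ 2 + k₄ ^ 3 - k₃ * k₅ + k₃ * k₄ * k₅ < 0 := by
    linarith [mul_neg_of_pos_of_neg h₄ hN, mul_pos h₃ h₅]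
  exact ⟨(mul_pos_of_neg_of_neg hA hB).ne',
    neg_mul_div_mul_pos (by positivity) hN hA hB⟩

/-- under conditions (cond), the denominator in the formula for ε
is nonzero and ε > 0. -/
theorem epsilon_pos
    (k₃ k₄ k₅ : ℝ)
    (h₃ : 0 < k₃) (h₄ : 0 < k₄) (h₅ : 0 < k₅)
    (h1 : 8 * k₃ < 1) (h2 : 8 * k₃ + k₄ < 1)
    (h3 : 8 * k₃ * k₄ + k₃ * k₅ + k₄ ^ 2 < k₄) :
    (-k₄ + k₃ * k₅) *
      (-k₄ ^ 2 + 8 * k₃ * k₄ ^ 2 + k₄ ^ 3 - k₃ * k₅ + k₃ * k₄ * k₅) ≠ 0 ∧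
    0 < -(2 * k₃ * k₄ * k₅ * (-k₄ + 8 * k₃ * k₄ + k₄ ^ 2 + k₃ * k₅)) /
      ((-k₄ + k₃ * k₅) *
        (-k₄ ^ 2 + 8 * k₃ * k₄ ^ 2 + k₄ ^ 3 - k₃ * k₅ + k₃ * k₄ * k₅)) :=
  epsilon_pos_general k₃ k₄ k₅ h₃ h₄ h₅ h3
end

section
/- Define k₂ = (−1 + 8k₃ + k₄)(−k₄ + k₃k₅)/(2k₃k₄k₅ − ε(−1 + k₄)(k₄ − k₃k₅)), where ε = −2k₃k₄k₅(−k₄ + 8k₃k₄ + k₄² + k₃k₅)/((−k₄ + k₃k₅)(−k₄² + 8k₃k₄² + k₄³ − k₃k₅ + k₃k₄k₅)). If k₃ > 0, k₄ > 0, k₅ > 0, 8k₃ < 1, 8k₃ + k₄ < 1 and 8k₃k₄ + k₃k₅ + k₄² < k₄, then both denominators are nonzero and k₂ > 0. -/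
/-! Every factor has a definite sign under the hypotheses: `k₃ k₅ < k₄`, and
`-k₄² + 8k₃k₄² + k₄³ - k₃k₅ + k₃k₄k₅ = -k₄²(1 - 8k₃ - k₄) - k₃k₅(1 - k₄) < 0`.
Hence the denominator of `ε` is positive, so is `ε`, the denominator of `k₂` equals
`2k₃k₄k₅ + ε(1 - k₄)(k₄ - k₃k₅) > 0`, and the numerator of `k₂` is a product of two
negative factors. -/

section

variable {k₃ k₄ k₅ : ℝ}

lemma k₃_mul_k₅_lt_k₄ (h₃ : 0 < k₃) (h₄ : 0 < k₄)
    (h3 : 8 * k₃ * k₄ + k₃ * k₅ + k₄ ^ 2 < k₄) : k₃ * k₅ < k₄ := by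
  nlinarith [mul_pos h₃ h₄, sq_nonneg k₄]

lemma cubic_factor_neg (h₃ : 0 < k₃) (h₄ : 0 < k₄) (h₅ : 0 < k₅) (h2 : 8 * k₃ + k₄ < 1) :
    -k₄ ^ 2 + 8 * k₃ * k₄ ^ 2 + k₄ ^ 3 - k₃ * k₅ + k₃ * k₄ * k₅ < 0 := by
  have hfactor : -k₄ ^ 2 + 8 * k₃ * k₄ ^ 2 + k₄ ^ 3 - k₃ * k₅ + k₃ * k₄ * k₅
      = -(k₄ ^ 2 * (1 - 8 * k₃ - k₄) + k₃ * k₅ * (1 - k₄)) := by ring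
  rw [hfactor, neg_neg_iff_pos]
  exact add_pos (mul_pos (by positivity) (by linarith)) (mul_pos (by positivity) (by linarith))

end

theorem k2_pos_general
    (k₃ k₄ k₅ : ℝ)
    (h₃ : 0 < k₃) (h₄ : 0 < k₄) (h₅ : 0 < k₅)
    (h2 : 8 * k₃ + k₄ < 1)
    (h3 : 8 * k₃ * k₄ + k₃ * k₅ + k₄ ^ 2 < k₄)
    (ε : ℝ)
    (hε : ε = -(2 * k₃ * k₄ * k₅ * (-k₄ + 8 * k₃ * k₄ + k₄ ^ 2 + k₃ * k₅)) /
      ((-k₄ + k₃ * k₅) *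
        (-k₄ ^ 2 + 8 * k₃ * k₄ ^ 2 + k₄ ^ 3 - k₃ * k₅ + k₃ * k₄ * k₅))) :
    (-k₄ + k₃ * k₅) *
      (-k₄ ^ 2 + 8 * k₃ * k₄ ^ 2 + k₄ ^ 3 - k₃ * k₅ + k₃ * k₄ * k₅) ≠ 0 ∧
    2 * k₃ * k₄ * k₅ - ε * (-1 + k₄) * (k₄ - k₃ * k₅) ≠ 0 ∧
    0 < (-1 + 8 * k₃ + k₄) * (-k₄ + k₃ * k₅) /
      (2 * k₃ * k₄ * k₅ - ε * (-1 + k₄) * (k₄ - k₃ * k₅)) := by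
  have hlt : k₃ * k₅ < k₄ := k₃_mul_k₅_lt_k₄ h₃ h₄ h3
  have hD₁ : 0 < (-k₄ + k₃ * k₅) *
      (-k₄ ^ 2 + 8 * k₃ * k₄ ^ 2 + k₄ ^ 3 - k₃ * k₅ + k₃ * k₄ * k₅) :=
    mul_pos_of_neg_of_neg (by linarith) (cubic_factor_neg h₃ h₄ h₅ h2)
  have hε₀ : 0 < ε := hε ▸ div_pos
    (neg_pos.2 (mul_neg_of_pos_of_neg (by positivity) (by linarith))) hD₁
  have hD₂ : 0 < 2 * k₃ * k₄ * k₅ - ε * (-1 + k₄) * (k₄ - k₃ * k₅) := by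
    have hrewrite : 2 * k₃ * k₄ * k₅ - ε * (-1 + k₄) * (k₄ - k₃ * k₅)
        = 2 * k₃ * k₄ * k₅ + ε * (1 - k₄) * (k₄ - k₃ * k₅) := by ring
    rw [hrewrite]
    exact add_pos (by positivity) (mul_pos (mul_pos hε₀ (by linarith)) (by linarith))
  exact ⟨hD₁.ne', hD₂.ne', div_pos (mul_pos_of_neg_of_neg (by linarith) (by linarith)) hD₂⟩

/-- under conditions (cond), both denominators in the formula for
k₂ are nonzero and k₂ > 0. -/
theorem k2_pos
    (k₃ k₄ k₅ : ℝ)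
    (h₃ : 0 < k₃) (h₄ : 0 < k₄) (h₅ : 0 < k₅)
    (h1 : 8 * k₃ < 1) (h2 : 8 * k₃ + k₄ < 1)
    (h3 : 8 * k₃ * k₄ + k₃ * k₅ + k₄ ^ 2 < k₄)
    (ε : ℝ)
    (hε : ε = -(2 * k₃ * k₄ * k₅ * (-k₄ + 8 * k₃ * k₄ + k₄ ^ 2 + k₃ * k₅)) /
      ((-k₄ + k₃ * k₅) *
        (-k₄ ^ 2 + 8 * k₃ * k₄ ^ 2 + k₄ ^ 3 - k₃ * k₅ + k₃ * k₄ * k₅))) :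
    (-k₄ + k₃ * k₅) *
      (-k₄ ^ 2 + 8 * k₃ * k₄ ^ 2 + k₄ ^ 3 - k₃ * k₅ + k₃ * k₄ * k₅) ≠ 0 ∧
    2 * k₃ * k₄ * k₅ - ε * (-1 + k₄) * (k₄ - k₃ * k₅) ≠ 0 ∧
    0 < (-1 + 8 * k₃ + k₄) * (-k₄ + k₃ * k₅) /
      (2 * k₃ * k₄ * k₅ - ε * (-1 + k₄) * (k₄ - k₃ * k₅)) :=
  k2_pos_general k₃ k₄ k₅ h₃ h₄ h₅ h2 h3 ε hε
end

section
/- Let q(x,y,z) = −(k₄/D)x² − (2k₃k₅/D)xy + y² − (k₄²(−1 + 8k₃ + k₄)/(k₃k₅D))xz − ((−k₄ + k₄² + k₃k₅)/(k₃k₄k₅))yz + ((k₄ − (1+8k₃)k₄² − k₃k₅ + k₃k₄k₅)/(4k₃²k₄k₅²))z², where D = (−1 + 8k₃)k₄² + k₄³ − k₃k₅ + k₃k₄k₅. Substitute x = ((k₄ − k₃k₅)/k₄)y − ((k₄ − k₃k₅)(k₄² + k₃k₅)/(2k₃k₄²k₅))z. If k₃ = k₄ = 1/10 and 0 < k₅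 < 1/10, then the resulting quadratic form q₁(y,z) in (y,z) is positive definite. -/
/-!
For `k₃ = k₄ = 1/10` we have `D = -(1 + 90 k₅)/1000 < 0`, and clearing the denominator
`4 k₅² (1 + 90 k₅)²` the restricted form becomes `N(k₅) (2 k₅ y - z)² + M(k₅) z²` with cubic and
quintic polynomials `N`, `M` whose positive low-order terms dominate on `[0, 1/10]`.
Since `(y, z) ↦ (2 k₅ y - z, z)` is invertible, this sum of squares is positive definite.
-/

noncomputable section

def lyapunovDenom (k₃ k₄ k₅ : ℝ) : ℝ :=
  (-1 + 8 * k₃) * k₄ ^ 2 + k₄ ^ 3 - k₃ * k₅ + k₃ * k₄ * k₅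

def lyapunovQuadratic (k₃ k₄ k₅ x y z : ℝ) : ℝ :=
  let D := lyapunovDenom k₃ k₄ k₅;
  -(k₄ / D) * x ^ 2 - (2 * k₃ * k₅ / D) * x * y + y ^ 2 -
    (k₄ ^ 2 * (-1 + 8 * k₃ + k₄) / (k₃ * k₅ * D)) * x * z -
    ((-k₄ + k₄ ^ 2 + k₃ * k₅) / (k₃ * k₄ * k₅)) * y * z +
    ((k₄ - (1 + 8 * k₃) * k₄ ^ 2 - k₃ * k₅ + k₃ * k₄ * k₅) /
      (4 * k₃ ^ 2 * k₄ * k₅ ^ 2)) * z ^ 2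

def centerManifoldLinear (k₃ k₄ k₅ y z : ℝ) : ℝ :=
  ((k₄ - k₃ * k₅) / k₄) * y -
    ((k₄ - k₃ * k₅) * (k₄ ^ 2 + k₃ * k₅) / (2 * k₃ * k₄ ^ 2 * k₅)) * z

end

theorem lyapunovQuadratic_centerManifoldLinear_eq {k₅ : ℝ} (hk₅ : 0 < k₅) (y z : ℝ) :
    lyapunovQuadratic (1 / 10) (1 / 10) k₅ (centerManifoldLinear (1 / 10) (1 / 10) k₅ y z) y z =
      ((101 + 9180 * k₅ + 8000 * k₅ ^ 2 - 9000 * k₅ ^ 3) * (2 * k₅ * y - z) ^ 2 +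
        (101 + 18270 * k₅ + 824100 * k₅ ^ 2 - 207000 * k₅ ^ 3 - 1610000 * k₅ ^ 4 +
          900000 * k₅ ^ 5) * z ^ 2) / (4 * k₅ ^ 2 * (1 + 90 * k₅) ^ 2) := by
  have hD : lyapunovDenom (1 / 10) (1 / 10) k₅ = -(1 + 90 * k₅) / 1000 := by
    unfold lyapunovDenom; ring
  have hu : 1 + 90 * k₅ ≠ 0 := by positivity
  simp only [lyapunovQuadratic, centerManifoldLinear, hD]
  field_simp
  ring

theorem cubic_coeff_pos {k : ℝ} (hk₀ : 0 ≤ k) (hk₁ : k ≤ 1 / 10) :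
    0 < 101 + 9180 * k + 8000 * k ^ 2 - 9000 * k ^ 3 := by
  have h₃ : k ^ 3 ≤ k ^ 2 / 10 := by nlinarith [sq_nonneg k]
  nlinarith [sq_nonneg k]

theorem quintic_coeff_pos {k : ℝ} (hk₀ : 0 ≤ k) (hk₁ : k ≤ 1 / 10) :
    0 < 101 + 18270 * k + 824100 * k ^ 2 - 207000 * k ^ 3 - 1610000 * k ^ 4 +
      900000 * k ^ 5 := by
  have h₃ : k ^ 3 ≤ k ^ 2 / 10 := by nlinarith [sq_nonneg k]
  have h₄ : k ^ 4 ≤ k ^ 2 / 100 := by nlinarith [sq_nonneg k, sq_nonneg (k ^ 2)]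
  have h₅ : 0 ≤ k ^ 5 := by positivity
  nlinarith [sq_nonneg k]

theorem mul_sub_sq_add_mul_sq_pos {a c s y z : ℝ} (ha : 0 < a) (hc : 0 < c) (hs : s ≠ 0)
    (hyz : (y, z) ≠ (0, 0)) : 0 < a * (s * y - z) ^ 2 + c * z ^ 2 := by
  rcases eq_or_ne z 0 with rfl | hz
  · have hy : y ≠ 0 := fun hy => hyz (by rw [hy])
    have : 0 < (s * y - 0) ^ 2 := by rw [sub_zero]; positivity
    positivity
  · have : 0 < z ^ 2 := by positivity
    positivity

/-- the quadratic part of the Lyapunov function, restricted to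
the linear approximation of the center manifold, is positive definite for
k₃ = k₄ = 1/10 and 0 < k₅ < 1/10. -/
theorem q1_positive_definite
    (k₃ k₄ k₅ : ℝ) (h₃ : k₃ = 1 / 10) (h₄ : k₄ = 1 / 10)
    (h₅ : 0 < k₅) (h₅' : k₅ < 1 / 10)
    (D : ℝ) (hD : D = (-1 + 8 * k₃) * k₄ ^ 2 + k₄ ^ 3 - k₃ * k₅ + k₃ * k₄ * k₅)
    (q : ℝ → ℝ → ℝ → ℝ)
    (hq : ∀ x y z, q x y z =
      -(k₄ / D) * x ^ 2 - (2 * k₃ * k₅ / D) * x * y + y ^ 2 -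
      (k₄ ^ 2 * (-1 + 8 * k₃ + k₄) / (k₃ * k₅ * D)) * x * z -
      ((-k₄ + k₄ ^ 2 + k₃ * k₅) / (k₃ * k₄ * k₅)) * y * z +
      ((k₄ - (1 + 8 * k₃) * k₄ ^ 2 - k₃ * k₅ + k₃ * k₄ * k₅) /
        (4 * k₃ ^ 2 * k₄ * k₅ ^ 2)) * z ^ 2)
    (h : ℝ → ℝ → ℝ)
    (hh : ∀ y z, h y z = ((k₄ - k₃ * k₅) / k₄) * y -
      ((k₄ - k₃ * k₅) * (k₄ ^ 2 + k₃ * k₅) / (2 * k₃ * k₄ ^ 2 * k₅)) * z) :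
    ∀ y z : ℝ, (y, z) ≠ (0, 0) → 0 < q (h y z) y z := by
  intro y z hyz
  have hqh : q (h y z) y z =
      lyapunovQuadratic k₃ k₄ k₅ (centerManifoldLinear k₃ k₄ k₅ y z) y z := by
    rw [hq, hh, hD]; rfl
  subst h₃ h₄
  rw [hqh, lyapunovQuadratic_centerManifoldLinear_eq h₅]
  apply div_pos _ (by positivity)
  exact mul_sub_sq_add_mul_sq_pos (cubic_coeff_pos h₅.le h₅'.le)
    (quintic_coeff_pos h₅.le h₅'.le) (by positivity) hyz
end
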